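/- arXiv:2210.09023 — 6 statements merged into one kernel-verified Lean document; each statement's English description precedes it below -/
import Mathlib

section
/- For every dimension d ≥ 1 there exists a constant C_d ≥ 1, depending only on d, with the following property: for every h > 0 and every set P ⊆ ℝ^d such that every closed axis-aligned cube in ℝ^d of side length h/C_d contains at least one point of P, and for all x, y ∈ ℝ^d with |x − y| ≥ h, one has d_{h,P}(x,y) ≤ C_d |x − y|. -/
open scoped ENNReal

noncomputable section

/-- A point in Euclidean space `ℝ^d`. -/
abbrev Pt (d : ℕ) := EuclideanSpace ℝ (Fin d)

/-- `p = (p₀, …, p_m)` is an admissible path in `P` from `x` to `y` with step size `h`: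
all its points lie in `P`, the first point is within `h/2` of `x`, the last within `h/2`
of `y`, and consecutive points are at distance at most `h`. (A path with `m + 1` points
corresponds to a path with `m` elements in the paper, which is always nonempty.) -/
def IsPath {d : ℕ} (P : Set (Pt d)) (h : ℝ) (x y : Pt d) {m : ℕ}
    (p : Fin (m + 1) → Pt d) : Prop :=
  (∀ i, p i ∈ P) ∧ dist x (p 0) ≤ h / 2 ∧ dist y (p (Fin.last m)) ≤ h / 2 ∧
    ∀ i : Fin m, dist (p i.castSucc) (p i.succ) ≤ h

/-- The length `L(p)` of a path: the sum of the lengths of its hops. -/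
def pathLength {d m : ℕ} (p : Fin (m + 1) → Pt d) : ℝ :=
  ∑ i : Fin m, dist (p i.castSucc) (p i.succ)

/-- The distance `d_{h,P}(x,y) ∈ [0,∞]`: the infimum of the lengths of admissible
paths in `P` from `x` to `y` with step size `h` (equal to `+∞` if there is none). -/
def graphDist {d : ℕ} (P : Set (Pt d)) (h : ℝ) (x y : Pt d) : ℝ≥0∞ :=
  ⨅ (m : ℕ) (p : Fin (m + 1) → Pt d) (_ : IsPath P h x y p),
    ENNReal.ofReal (pathLength p)

/-! A cube of side `h / (4√d)` has diameter `h / 4`, so `P` is an `h/4`-net. Cut the segment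
`[x, y]` into `N = ⌈2|x - y| / h⌉` pieces of length at most `h / 2` and snap each division point
to a point of `P` within `h / 4`: consecutive snapped points are at most `h` apart, so this is an
admissible path, of length at most `N h ≤ 2|x - y| + h ≤ 3|x - y|`. -/

theorem EuclideanSpace.dist_le_sqrt_card_mul {ι : Type*} [Fintype ι]
    {a b : EuclideanSpace ℝ ι} {r : ℝ} (hab : ∀ i, dist (a i) (b i) ≤ r) :
    dist a b ≤ √(Fintype.card ι) * r := by
  rcases isEmpty_or_nonempty ι with _ | ⟨⟨i₀⟩⟩
  · simp [EuclideanSpace.dist_eq]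
  have hr : 0 ≤ r := dist_nonneg.trans (hab i₀)
  calc dist a b = √(∑ i, dist (a i) (b i) ^ 2) := EuclideanSpace.dist_eq a b
    _ ≤ √(∑ _i : ι, r ^ 2) := by
        gcongr with i
        exact hab i
    _ = √(Fintype.card ι) * r := by
        rw [Finset.sum_const, Finset.card_univ, nsmul_eq_mul, Real.sqrt_mul (Nat.cast_nonneg _),
          Real.sqrt_sq hr]

theorem exists_mem_dist_le_of_forall_cube_inter {d : ℕ} {P : Set (Pt d)} {s : ℝ}
    (hP : ∀ a : Pt d, ∃ q ∈ P, ∀ i, q i ∈ Set.Icc (a i) (a i + s)) (a : Pt d) :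
    ∃ q ∈ P, dist a q ≤ √d * s := by
  obtain ⟨q, hqP, hq⟩ := hP a
  refine ⟨q, hqP, ?_⟩
  simpa using EuclideanSpace.dist_le_sqrt_card_mul (a := a) (b := q) fun i => by
    rw [Real.dist_eq, abs_le]
    constructor <;> linarith [(hq i).1, (hq i).2]

theorem graphDist_le_ofReal_pathLength {d m : ℕ} {P : Set (Pt d)} {h : ℝ} {x y : Pt d}
    {p : Fin (m + 1) → Pt d} (hp : IsPath P h x y p) :
    graphDist P h x y ≤ ENNReal.ofReal (pathLength p) :=
  iInf_le_of_le m <| iInf_le_of_le p <| iInf_le _ hp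

theorem IsPath.pathLength_le {d m : ℕ} {P : Set (Pt d)} {h : ℝ} {x y : Pt d}
    {p : Fin (m + 1) → Pt d} (hp : IsPath P h x y p) : pathLength p ≤ m * h := by
  simpa [pathLength] using Finset.sum_le_sum fun i (_ : i ∈ Finset.univ) => hp.2.2.2 i

theorem exists_isPath_of_forall_exists_dist_le {d : ℕ} {P : Set (Pt d)} {h r : ℝ}
    (hP : ∀ a : Pt d, ∃ q ∈ P, dist a q ≤ r) {x y : Pt d} {N : ℕ} (hN : 0 < N)
    (hstep : 2 * r + dist x y / N ≤ h) :
    ∃ p : Fin (N + 1) → Pt d, IsPath P h x y p := by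
  choose f hfP hf using hP
  have hr : r ≤ h / 2 := by
    have : 0 ≤ dist x y / N := by positivity
    linarith
  let z : ℕ → Pt d := fun k => AffineMap.lineMap x y ((k : ℝ) / N)
  have hz_last : z N = y := by
    simp [z, div_self (Nat.cast_ne_zero.mpr hN.ne' : (N : ℝ) ≠ 0)]
  have hz_succ (k : ℕ) : dist (z k) (z (k + 1)) = dist x y / N := by
    simp only [z, dist_lineMap_lineMap, Real.dist_eq]
    rw [Nat.cast_succ, add_div, sub_add_cancel_left, abs_neg, abs_of_nonneg (by positivity)]
    ring
  refine ⟨fun i => f (z i), fun i => hfP _, ?_, ?_, fun i => ?_⟩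
  · simpa [z] using (hf x).trans hr
  · simpa [hz_last] using (hf y).trans hr
  · calc dist (f (z i)) (f (z (i + 1)))
        ≤ dist (f (z i)) (z i) + dist (z i) (z (i + 1)) + dist (z (i + 1)) (f (z (i + 1))) :=
          dist_triangle4 _ _ _ _
      _ ≤ r + dist x y / N + r := by
          rw [dist_comm, hz_succ]
          gcongr <;> exact hf _
      _ ≤ h := by linarith

theorem graphDist_le_three_mul_dist {d : ℕ} {P : Set (Pt d)} {h : ℝ}
    (hP : ∀ a : Pt d, ∃ q ∈ P, dist a q ≤ h / 4) (hh : 0 < h) {x y : Pt d}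
    (hxy : h ≤ dist x y) :
    graphDist P h x y ≤ ENNReal.ofReal (3 * dist x y) := by
  set D := dist x y
  have hD : 0 < D := hh.trans_le hxy
  set N : ℕ := ⌈2 * D / h⌉₊
  have hN : 0 < N := Nat.ceil_pos.mpr (by positivity)
  have hN_ge : 2 * D ≤ N * h := (div_le_iff₀ hh).mp (Nat.le_ceil _)
  have hN_le : N * h ≤ 2 * D + h := by
    have := mul_le_mul_of_nonneg_right
      (Nat.ceil_lt_add_one (show 0 ≤ 2 * D / h by positivity)).le hh.le
    rwa [add_mul, div_mul_cancel₀ _ hh.ne', one_mul] at this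
  have hstep : 2 * (h / 4) + D / N ≤ h := by
    have : D / N ≤ h / 2 := by
      rw [div_le_iff₀ (by exact_mod_cast hN)]
      linarith
    linarith
  obtain ⟨p, hp⟩ := exists_isPath_of_forall_exists_dist_le hP hN hstep
  calc graphDist P h x y ≤ ENNReal.ofReal (pathLength p) := graphDist_le_ofReal_pathLength hp
    _ ≤ ENNReal.ofReal (3 * D) := ENNReal.ofReal_le_ofReal (by linarith [hp.pathLength_le])

/-- **Upper bound.** For every dimension `d ≥ 1` there is a constant `C_d ≥ 1`,
depending only on `d`, such that: for every `h > 0` and every set `P ⊆ ℝ^d` with the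
property that every closed axis-aligned cube of side length `h / C_d` contains a
point of `P`, and all `x, y` with `|x - y| ≥ h`, one has `d_{h,P}(x,y) ≤ C_d |x - y|`. -/
theorem graphDist_upper_bound :
    ∀ d : ℕ, 1 ≤ d → ∃ C : ℝ, 1 ≤ C ∧
      ∀ h : ℝ, 0 < h → ∀ P : Set (Pt d),
        (∀ a : Pt d, ∃ q ∈ P, ∀ i, q i ∈ Set.Icc (a i) (a i + h / C)) →
        ∀ x y : Pt d, h ≤ dist x y →
          graphDist P h x y ≤ ENNReal.ofReal (C * dist x y) := by
  intro d hd
  have hsqrt : 1 ≤ √(d : ℝ) := Real.one_le_sqrt.mpr (by exact_mod_cast hd)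
  refine ⟨4 * √d, by linarith, fun h hh P hP x y hxy => ?_⟩
  have hnet (a : Pt d) : ∃ q ∈ P, dist a q ≤ h / 4 := by
    obtain ⟨q, hqP, hq⟩ := exists_mem_dist_le_of_forall_cube_inter hP a
    refine ⟨q, hqP, hq.trans_eq ?_⟩
    field_simp
  calc graphDist P h x y ≤ ENNReal.ofReal (3 * dist x y) := graphDist_le_three_mul_dist hnet hh hxy
    _ ≤ ENNReal.ofReal (4 * √d * dist x y) := by
        gcongr
        linarith
end
end

section
/- Let P ⊆ ℝ^d, h > 0, x, y ∈ ℝ^d, and let p = (p_1, …, p_m) ∈ Π_{h,P}(x,y) be an optimal path, i.e. L(p) = d_{h,P}(x,y), which moreover has the smallest number of elements m among all optimal paths in Π_{h,P}(x,y). Then for every γ > 0 and every index 1 ≤ j ≤ m−2 the following hop dichotomy holds: if |p_{j+1} − p_j| ≤ γ, then |p_{j+2} − p_{j+1}| > h − γ. -/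
open scoped ENNReal

noncomputable section

/-! Deleting the middle point `p_{j+1}` of a hop of length `≤ γ` followed by one of length
`≤ h - γ` joins `p_j` to `p_{j+2}` by a single hop of length `≤ h`, by the triangle inequality.
The shortened path is therefore admissible and no longer than `p`, hence again optimal, and it
has one point fewer, contradicting the minimality of `p`. -/

open Fin

section RemovePoint

variable {d n : ℕ}

def hopLength {m : ℕ} (p : Fin (m + 1) → Pt d) (i : Fin m) : ℝ :=
  dist (p i.castSucc) (p i.succ)

theorem hopLength_removeNth_of_ne (p : Fin (n + 2) → Pt d) {c i : Fin n} (hi : i ≠ c) :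
    hopLength (removeNth c.castSucc.succ p) i = hopLength p (c.succ.succAbove i) := by
  rcases hi.lt_or_gt with hic | hci
  · simp [hopLength, removeNth, succAbove_succ_of_le, hic, hic.le]
  · simp [hopLength, removeNth, succAbove_succ_of_lt, hci, hci.le]

theorem hopLength_removeNth_self (p : Fin (n + 2) → Pt d) (c : Fin n) :
    hopLength (removeNth c.castSucc.succ p) c = dist (p c.castSucc.castSucc) (p c.succ.succ) := by
  simp [hopLength, removeNth]

theorem pathLength_removeNth_le (p : Fin (n + 2) → Pt d) (c : Fin n) :
    pathLength (removeNth c.castSucc.succ p) ≤ pathLength p := by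
  -- hops `c.castSucc` and `c.succ` of `p` merge into hop `c` of the shortened path
  set merged : Fin n → ℝ := Pi.single c (hopLength p c.succ) with hmerged
  have hop_le (i : Fin n) : hopLength (removeNth c.castSucc.succ p) i ≤
      hopLength p (c.succ.succAbove i) + merged i := by
    rcases eq_or_ne i c with rfl | hi
    · rw [hopLength_removeNth_self, succAbove_succ_self, hmerged, Pi.single_eq_same]
      simpa [hopLength] using dist_triangle _ (p i.castSucc.succ) _
    · rw [hopLength_removeNth_of_ne p hi, hmerged, Pi.single_eq_of_ne hi, add_zero]
  calc pathLength (removeNth c.castSucc.succ p)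
      ≤ ∑ i, (hopLength p (c.succ.succAbove i) + merged i) :=
        Finset.sum_le_sum fun i _ ↦ hop_le i
    _ = pathLength p := by
      rw [Finset.sum_add_distrib, hmerged, Finset.sum_pi_single', if_pos (Finset.mem_univ c),
        add_comm, ← Fin.sum_univ_succAbove (hopLength p) c.succ]
      rfl

theorem IsPath.removeNth {P : Set (Pt d)} {h : ℝ} {x y : Pt d} {p : Fin (n + 2) → Pt d}
    (hp : IsPath P h x y p) (c : Fin n) (hc : dist (p c.castSucc.castSucc) (p c.succ.succ) ≤ h) :
    IsPath P h x y (removeNth c.castSucc.succ p) := by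
  refine ⟨fun i ↦ hp.1 _, ?_, ?_, fun i ↦ ?_⟩
  · simpa [Fin.removeNth] using hp.2.1
  · simpa [Fin.removeNth, succAbove_succ_of_lt _ _ (castSucc_lt_last c)] using hp.2.2.1
  · rcases eq_or_ne i c with rfl | hi
    · exact (hopLength_removeNth_self p i).trans_le hc
    · exact (hopLength_removeNth_of_ne p hi).trans_le (hp.2.2.2 _)

theorem graphDist_le_pathLength {P : Set (Pt d)} {h : ℝ} {x y : Pt d} {m : ℕ}
    {p : Fin (m + 1) → Pt d} (hp : IsPath P h x y p) :
    graphDist P h x y ≤ ENNReal.ofReal (pathLength p) :=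
  iInf_le_of_le m <| iInf_le_of_le p <| iInf_le _ hp

end RemovePoint

/-- **Hop dichotomy.** Let `p ∈ Π_{h,P}(x,y)` be an optimal path (`L(p) = d_{h,P}(x,y)`)
with the smallest number of points among all optimal paths. Then for every `γ > 0`
and every consecutive triple `(p_j, p_{j+1}, p_{j+2})` of points of the path:
if `|p_{j+1} - p_j| ≤ γ` then `|p_{j+2} - p_{j+1}| > h - γ`. -/
theorem hop_dichotomy {d : ℕ} (P : Set (Pt d)) (h : ℝ)
    (x y : Pt d) {m : ℕ} (p : Fin (m + 1) → Pt d) (hp : IsPath P h x y p)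
    (hopt : ENNReal.ofReal (pathLength p) = graphDist P h x y)
    (hmin : ∀ (m' : ℕ) (q : Fin (m' + 1) → Pt d), IsPath P h x y q →
      ENNReal.ofReal (pathLength q) = graphDist P h x y → m ≤ m')
    (γ : ℝ) (j : ℕ) (hj : j + 2 ≤ m)
    (hshort : dist (p ⟨j, by omega⟩) (p ⟨j + 1, by omega⟩) ≤ γ) :
    h - γ < dist (p ⟨j + 1, by omega⟩) (p ⟨j + 2, by omega⟩) := by
  obtain ⟨n, rfl⟩ : ∃ n, m = n + 1 := ⟨m - 1, by omega⟩
  by_contra! hlong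
  let c : Fin n := ⟨j, by omega⟩
  change dist (p c.castSucc.castSucc) (p c.castSucc.succ) ≤ γ at hshort
  change dist (p c.castSucc.succ) (p c.succ.succ) ≤ h - γ at hlong
  have hbridge : dist (p c.castSucc.castSucc) (p c.succ.succ) ≤ h := by
    linarith [dist_triangle (p c.castSucc.castSucc) (p c.castSucc.succ) (p c.succ.succ)]
  have hq := hp.removeNth c hbridge
  have hq_opt : ENNReal.ofReal (pathLength (removeNth c.castSucc.succ p)) = graphDist P h x y :=
    le_antisymm ((ENNReal.ofReal_le_ofReal (pathLength_removeNth_le p c)).trans hopt.le)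
      (graphDist_le_pathLength hq)
  exact n.lt_succ_self.not_ge (hmin n _ hq hq_opt)
end
end

section
/- Let P ⊆ ℝ^d, h > 0, x, y ∈ ℝ^d, and let p = (p_1, …, p_m) ∈ Π_{h,P}(x,y) be an optimal path (L(p) = d_{h,P}(x,y)) with the smallest number of elements m among all optimal paths in Π_{h,P}(x,y). Then the number of points of the path satisfies m ≤ 6·L(p)/h + 2. -/
open scoped ENNReal

noncomputable section

/-- **Bound on the number of points of an optimal path.** Let `p ∈ Π_{h,P}(x,y)` be an
optimal path (`L(p) = d_{h,P}(x,y)`) with the smallest number of points among all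
optimal paths. Then the number of points of the path (here `m + 1`) satisfies
`#p ≤ 6 L(p) / h + 2`. -/
theorem optimal_path_card_bound {d : ℕ} (hd : 1 ≤ d) (P : Set (Pt d)) (h : ℝ) (hh : 0 < h)
    (x y : Pt d) {m : ℕ} (p : Fin (m + 1) → Pt d) (hp : IsPath P h x y p)
    (hopt : ENNReal.ofReal (pathLength p) = graphDist P h x y)
    (hmin : ∀ (m' : ℕ) (q : Fin (m' + 1) → Pt d), IsPath P h x y q →
      ENNReal.ofReal (pathLength q) = graphDist P h x y → m ≤ m') :
    (m + 1 : ℝ) ≤ 6 * pathLength p / h + 2 := by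
  obtain ⟨hmem, hx0, hylast, hhop⟩ := hp
  have hL0 : 0 ≤ pathLength p := Finset.sum_nonneg fun i _ => dist_nonneg
  rcases Nat.lt_or_ge m 2 with hm | hm
  · have h1 : (m : ℝ) ≤ 1 := by exact_mod_cast Nat.lt_succ_iff.mp hm
    have h2 : 0 ≤ 6 * pathLength p / h := by positivity
    push_cast
    linarith
  · obtain ⟨n, rfl⟩ : ∃ n, m = n + 2 := ⟨m - 2, by omega⟩
    set p' : ℕ → Pt d := fun i => p ⟨min i (n+2), by omega⟩ with hp'def
    have hp'' : ∀ (i : ℕ) (hi : i < n+3), p' i = p ⟨i, hi⟩ := by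
      intro i hi
      exact congrArg p (Fin.ext (by simp [hp'def]; omega))
    set e : ℕ → ℝ := fun i => dist (p' i) (p' (i+1)) with hedef
    have he0 : ∀ i, 0 ≤ e i := fun i => dist_nonneg
    have hpe : ∀ i : Fin (n+2), dist (p i.castSucc) (p i.succ) = e i := by
      intro i
      rw [hedef]
      simp only []
      rw [hp'' i (by have := i.isLt; omega), hp'' (i+1) (by have := i.isLt; omega)]
      congr 1 <;> exact congrArg p (Fin.ext (by simp))
    have he : ∀ i, i < n+2 → e i ≤ h := by
      intro i hi
      rw [← hpe ⟨i, hi⟩]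
      exact hhop ⟨i, hi⟩
    have hLp : pathLength p = ∑ i ∈ Finset.range (n+2), e i := by
      rw [pathLength, ← Fin.sum_univ_eq_sum_range (fun i => e i) (n+2)]
      exact Finset.sum_congr rfl fun i _ => hpe i
    have key : ∀ j, j ≤ n → h < dist (p' j) (p' (j+2)) := by
      intro j hj
      by_contra hcon
      push_neg at hcon
      set q' : ℕ → Pt d := fun i => if i ≤ j then p' i else p' (i+1) with hq'def
      set q : Fin (n+2) → Pt d := fun k => q' k with hqdef
      have hq0 : q 0 = p 0 := by
        show q' 0 = p 0
        rw [hq'def]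
        simp only [Nat.zero_le, if_pos]
        rw [hp'' 0 (by omega)]
        exact congrArg p (Fin.ext (by simp))
      have hqlast : q (Fin.last (n+1)) = p (Fin.last (n+2)) := by
        show q' (n+1) = p (Fin.last (n+2))
        rw [hq'def]
        simp only []
        rw [if_neg (by omega)]
        rw [hp'' (n+2) (by omega)]
        exact congrArg p (Fin.ext (by simp [Fin.last]))
      have hq_path : IsPath P h x y q := by
        refine ⟨fun k => ?_, by rw [hq0]; exact hx0, by rw [hqlast]; exact hylast, ?_⟩
        · show q' k ∈ P
          rw [hq'def]
          simp only []
          rcases le_or_gt (k : ℕ) j with hkj | hkj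
          · rw [if_pos hkj]; exact hmem _
          · rw [if_neg (by omega)]; exact hmem _
        · intro k
          have hk := k.isLt
          show dist (q' k) (q' (k+1)) ≤ h
          rcases lt_trichotomy (k : ℕ) j with hkj | hkj | hkj
          · rw [hq'def]
            simp only []
            rw [if_pos (by omega), if_pos (by omega)]
            exact he k (by omega)
          · rw [hq'def]
            simp only []
            rw [if_pos (by omega), if_neg (by omega)]
            rw [hkj]
            exact hcon
          · rw [hq'def]
            simp only []
            rw [if_neg (by omega), if_neg (by omega)]
            exact he (k+1) (by omega)
      have hLq : pathLength q = ∑ i ∈ Finset.range (n+1), dist (q' i) (q' (i+1)) := by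
        rw [pathLength, ← Fin.sum_univ_eq_sum_range (fun i => dist (q' i) (q' (i+1))) (n+1)]
        rfl
      have hsum : ∀ k, k ≤ n+1 →
          ∑ i ∈ Finset.range k, dist (q' i) (q' (i+1)) ≤
            ∑ i ∈ Finset.range (if k ≤ j then k else k+1), e i := by
        intro k
        induction k with
        | zero => intro _; simp
        | succ k ih =>
          intro hk
          have ihk := ih (by omega)
          rw [Finset.sum_range_succ]
          rcases lt_trichotomy k j with hkj | hkj | hkj
          · rw [if_pos (by omega)] at ihk
            rw [if_pos (by omega), Finset.sum_range_succ]
            have h1 : q' k = p' k := if_pos (by omega)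
            have h2 : q' (k+1) = p' (k+1) := if_pos (by omega)
            have h3 : dist (q' k) (q' (k+1)) = e k := by rw [h1, h2]
            linarith
          · rw [if_pos (by omega)] at ihk
            rw [if_neg (by omega), Finset.sum_range_succ, Finset.sum_range_succ]
            have h1 : q' k = p' k := if_pos (by omega)
            have h2 : q' (k+1) = p' (k+2) := by
              rw [hq'def]
              simp only []
              rw [if_neg (by omega)]
            have tri : dist (p' k) (p' (k+2)) ≤ e k + e (k+1) :=
              dist_triangle (p' k) (p' (k+1)) (p' (k+2))
            have h3 : dist (q' k) (q' (k+1)) ≤ e k + e (k+1) := by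
              rw [h1, h2]; exact tri
            linarith
          · rw [if_neg (by omega)] at ihk
            rw [if_neg (by omega), Finset.sum_range_succ]
            have h1 : q' k = p' (k+1) := if_neg (by omega)
            have h2 : q' (k+1) = p' (k+2) := if_neg (by omega)
            have h3 : dist (q' k) (q' (k+1)) = e (k+1) := by rw [h1, h2]
            linarith
      have hLq_le : pathLength q ≤ pathLength p := by
        rw [hLq, hLp]
        have := hsum (n+1) le_rfl
        rwa [if_neg (by omega)] at this
      have hq_dist_le : graphDist P h x y ≤ ENNReal.ofReal (pathLength q) :=
        iInf_le_of_le (n+1) (iInf_le_of_le q (iInf_le _ hq_path))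
      have hq_opt : ENNReal.ofReal (pathLength q) = graphDist P h x y :=
        le_antisymm (hopt ▸ ENNReal.ofReal_le_ofReal hLq_le) hq_dist_le
      exact absurd (hmin (n+1) q hq_path hq_opt) (by omega)
    have hsum2 : (n+1 : ℝ) * h ≤ 2 * pathLength p := by
      have h1 : ∀ i ∈ Finset.range (n+1), h ≤ e i + e (i+1) := by
        intro i hi
        simp only [Finset.mem_range] at hi
        have hk := key i (by omega)
        have tri : dist (p' i) (p' (i+2)) ≤ e i + e (i+1) :=
          dist_triangle (p' i) (p' (i+1)) (p' (i+2))
        linarith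
      have a1 : ∑ i ∈ Finset.range (n+1), e i ≤ ∑ i ∈ Finset.range (n+2), e i :=
        Finset.sum_le_sum_of_subset_of_nonneg
          (Finset.range_subset_range.mpr (by omega)) (fun i _ _ => he0 i)
      have a2 : ∑ i ∈ Finset.range (n+1), e (i+1) ≤ ∑ i ∈ Finset.range (n+2), e i := by
        rw [Finset.sum_range_succ' e (n+1)]
        linarith [he0 0]
      calc (n+1 : ℝ) * h = ∑ _i ∈ Finset.range (n+1), h := by
            rw [Finset.sum_const, Finset.card_range, nsmul_eq_mul]
            push_cast
            ring
        _ ≤ ∑ i ∈ Finset.range (n+1), (e i + e (i+1)) := Finset.sum_le_sum h1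
        _ = ∑ i ∈ Finset.range (n+1), e i + ∑ i ∈ Finset.range (n+1), e (i+1) :=
            Finset.sum_add_distrib
        _ ≤ 2 * pathLength p := by rw [hLp]; linarith
    have hfin : (n+1 : ℝ) ≤ 6 * pathLength p / h := by
      rw [le_div_iff₀ hh]
      nlinarith
    push_cast
    linarith
end
end

section
/- Let f : [0,∞) → ℝ and g : [0,∞) → [0,∞) satisfy f(s) + f(t) − g(s+t) ≤ f(s+t) ≤ f(s) + f(t) + g(s+t) for all 0 ≤ s ≤ t ≤ 2s, and assume that σ := lim_{s→∞} f(s)/s exists and lies in (0,∞). Then for every s > 0 one has the quantitative bound |f(s)/s − σ| ≤ (1/s)·Σ_{n=0}^∞ g(2^{n+1} s)/2^{n+1}, where the series on the right-hand side is interpreted in [0, ∞]. -/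
open scoped ENNReal
open Filter Topology

/-! Taking `s = t` in the hypothesis gives the doubling estimate `|f (2x) - 2 f x| ≤ g (2x)`,
so the dyadic averages `f (2ⁿ s) / 2ⁿ` move by at most `g (2ⁿ⁺¹ s) / 2ⁿ⁺¹` from step `n` to
step `n + 1`. They converge to `σ s`, and telescoping in the extended metric bounds the distance
from their first term `f s` to `σ s` by the series, whether or not it converges. -/

lemma abs_sub_two_mul_le_of_almost_additive {f g : ℝ → ℝ} {x : ℝ}
    (h : f x + f x - g (x + x) ≤ f (x + x) ∧ f (x + x) ≤ f x + f x + g (x + x)) :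
    |f (2 * x) - 2 * f x| ≤ g (2 * x) := by
  rw [two_mul, abs_le]
  constructor <;> linarith [h.1, h.2]

lemma dist_div_div_two_mul_le {x y e c : ℝ} (hc : 0 < c) (h : |y - 2 * x| ≤ e) :
    dist (x / c) (y / (2 * c)) ≤ e / (2 * c) := by
  have hdiff : y / (2 * c) - x / c = (y - 2 * x) / (2 * c) := by field_simp
  rw [dist_comm, Real.dist_eq, hdiff, abs_div, abs_of_pos (by positivity : (0 : ℝ) < 2 * c)]
  gcongr

lemma tendsto_div_pow_of_tendsto_div {f : ℝ → ℝ} {σ c s : ℝ} (hc : 1 < c) (hs : 0 < s)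
    (hf : Tendsto (fun x => f x / x) atTop (𝓝 σ)) :
    Tendsto (fun n : ℕ => f (c ^ n * s) / c ^ n) atTop (𝓝 (σ * s)) := by
  have hpow : Tendsto (fun n : ℕ => c ^ n * s) atTop atTop :=
    (tendsto_pow_atTop_atTop_of_one_lt hc).atTop_mul_const hs
  refine ((hf.comp hpow).mul_const s).congr fun n => ?_
  have : c ^ n ≠ 0 := pow_ne_zero n (by linarith)
  simp only [Function.comp_apply]
  field_simp

theorem edist_le_tsum_of_abs_sub_two_mul_le {f g : ℝ → ℝ} {σ s : ℝ} (hs : 0 < s)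
    (hdouble : ∀ x, 0 ≤ x → |f (2 * x) - 2 * f x| ≤ g (2 * x))
    (hf : Tendsto (fun x => f x / x) atTop (𝓝 σ)) :
    edist (f s) (σ * s) ≤ ∑' n : ℕ, ENNReal.ofReal (g (2 ^ (n + 1) * s) / 2 ^ (n + 1)) := by
  have hstep : ∀ n : ℕ, edist (f (2 ^ n * s) / 2 ^ n) (f (2 ^ (n + 1) * s) / 2 ^ (n + 1)) ≤
      ENNReal.ofReal (g (2 ^ (n + 1) * s) / 2 ^ (n + 1)) := fun n => by
    have hdyadic : (2 : ℝ) ^ (n + 1) * s = 2 * (2 ^ n * s) := by ring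
    rw [edist_dist, hdyadic, pow_succ']
    exact ENNReal.ofReal_le_ofReal <|
      dist_div_div_two_mul_le (by positivity) (hdouble _ (by positivity))
  simpa using edist_le_tsum_of_edist_le_of_tendsto₀ _ hstep
    (tendsto_div_pow_of_tendsto_div one_lt_two hs hf)

theorem polya_szego_rate_general (f g : ℝ → ℝ)
    (hbound : ∀ s t : ℝ, 0 ≤ s → s ≤ t → t ≤ 2 * s →
      f s + f t - g (s + t) ≤ f (s + t) ∧ f (s + t) ≤ f s + f t + g (s + t))
    (σ : ℝ)
    (hlim : Filter.Tendsto (fun s : ℝ => f s / s) Filter.atTop (nhds σ)) :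
    ∀ s : ℝ, 0 < s →
      ENNReal.ofReal |f s / s - σ| ≤
        ENNReal.ofReal (1 / s) *
          ∑' n : ℕ, ENNReal.ofReal (g (2 ^ (n + 1) * s) / 2 ^ (n + 1)) := by
  intro s hs
  have hdouble : ∀ x, 0 ≤ x → |f (2 * x) - 2 * f x| ≤ g (2 * x) := fun x hx =>
    abs_sub_two_mul_le_of_almost_additive (hbound x x hx le_rfl (by linarith))
  have hscale : |f s / s - σ| = 1 / s * |f s - σ * s| := by
    rw [div_sub' hs.ne', mul_comm s σ, abs_div, abs_of_pos hs, one_div_mul_eq_div]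
  rw [hscale, ENNReal.ofReal_mul (by positivity), ← Real.dist_eq, ← edist_dist]
  gcongr
  exact edist_le_tsum_of_abs_sub_two_mul_le hs hdouble hlim

/-- **Quantitative Pólya–Szegő-type rate.** Let `f : [0,∞) → ℝ` and
`g : [0,∞) → [0,∞)` satisfy `f(s) + f(t) - g(s+t) ≤ f(s+t) ≤ f(s) + f(t) + g(s+t)`
for all `0 ≤ s ≤ t ≤ 2s`, and assume `σ := lim_{s→∞} f(s)/s` exists with
`σ ∈ (0,∞)`. Then for every `s > 0`,
`|f(s)/s - σ| ≤ (1/s) Σ_{n=0}^∞ g(2^{n+1} s)/2^{n+1}`, where the series is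
interpreted in `[0,∞]`. -/
theorem polya_szego_rate (f g : ℝ → ℝ) (hg : ∀ z : ℝ, 0 ≤ z → 0 ≤ g z)
    (hbound : ∀ s t : ℝ, 0 ≤ s → s ≤ t → t ≤ 2 * s →
      f s + f t - g (s + t) ≤ f (s + t) ∧ f (s + t) ≤ f s + f t + g (s + t))
    (σ : ℝ) (hσ : 0 < σ)
    (hlim : Filter.Tendsto (fun s : ℝ => f s / s) Filter.atTop (nhds σ)) :
    ∀ s : ℝ, 0 < s →
      ENNReal.ofReal |f s / s - σ| ≤
        ENNReal.ofReal (1 / s) *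
          ∑' n : ℕ, ENNReal.ofReal (g (2 ^ (n + 1) * s) / 2 ^ (n + 1)) :=
  polya_szego_rate_general f g hbound σ hlim
end

section
/- There exists a universal constant C > 0 (independent of all the data below) with the following property. Let (Ω, ℱ, ℙ) be a probability space with filtration {ℱ_k}_{k≥0} and let {M_k}_{k≥0} be a martingale with increments Δ_k := M_k − M_{k−1}. Let {U_k}_{k≥1} be nonnegative integrable ℱ-measurable random variables, and let c > 0 and λ_0 ≥ c²/(4e) be constants such that for all k ≥ 1: |Δ_k| ≤ c almost surely, E[Δ_k² | ℱ_{k−1}] ≤ E[U_k | ℱ_{k−1}] almost surely, and for every K ∈ ℕ the sum S_K := Σ_{k=1}^K U_k satisfies S_K ≤ λ_0 almost surely. Then for every K ∈ ℕ and every ε ≥ 0 one has ℙ(M_K − M_0 > ε) ≤ C·exp(−ε/(2√(e·λ_0))). -/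
/-!
Put `t = 1 / √(e l₀)`, so that `|t Δ_k| ≤ 2`. On `[-2, 2]` the exponential satisfies
`e^y ≤ 1 + y + κ y²` with `κ = (e² - 3) / 4`; as `E[Δ_k | ℱ_{k-1}] = 0`, this makes
`Z_n = exp (t (M_n - M_0) - κ t² A_n)` a supermartingale, where `A_n = ∑_{j<n} E[U_{j+1} | ℱ_j]`.
A Garsia-type telescoping argument, using only `∑ U_k ≤ l₀`, bounds
`E[exp (θ A_n)] ≤ 1 / (1 - θ l₀)`, and `θ = κ t²` gives `θ l₀ = (e² - 3) / (4e) ≤ 1/2`.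
Since `exp (t (M_n - M_0) / 2)` is the geometric mean of `Z_n` and `exp (κ t² A_n)`, its
expectation is at most `(1 + 2) / 2`, and Chernoff's bound gives the claim with `C = 3/2`.
-/

open MeasureTheory Filter Finset Real ProbabilityTheory

namespace Real

theorem exp_le_one_add_add_mul_sq {y : ℝ} (hy : |y| ≤ 2) :
    exp y ≤ 1 + y + (exp 2 - 3) / 4 * y ^ 2 := by
  have tail (z : ℝ) : exp z = 1 + z + ∑' n : ℕ, z ^ (n + 2) / (n + 2).factorial := by
    rw [exp_eq_exp_ℝ, NormedSpace.exp_eq_tsum_div]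
    dsimp only
    rw [← (summable_pow_div_factorial z).sum_add_tsum_nat_add 2]
    simp [sum_range_succ]
  have summable_tail (z : ℝ) : Summable fun n : ℕ => z ^ (n + 2) / (n + 2).factorial :=
    (summable_pow_div_factorial z).comp_injective (add_left_injective 2)
  have termwise (n : ℕ) :
      y ^ (n + 2) / (n + 2).factorial ≤ y ^ 2 / 4 * (2 ^ (n + 2) / (n + 2).factorial) := by
    have hpow : y ^ (n + 2) ≤ 2 ^ n * y ^ 2 := calc
      y ^ (n + 2) ≤ |y| ^ n * |y| ^ 2 := by rw [← pow_add, ← abs_pow]; exact le_abs_self _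
      _ ≤ 2 ^ n * y ^ 2 := by
        rw [sq_abs]; gcongr
    rw [mul_div_assoc', div_le_div_iff_of_pos_right (by positivity)]
    exact hpow.trans_eq (by ring)
  have key := (summable_tail y).tsum_le_tsum termwise ((summable_tail 2).mul_left _)
  have tail_two : ∑' n : ℕ, (2 : ℝ) ^ (n + 2) / (n + 2).factorial = exp 2 - 3 := by
    linarith [tail 2]
  rw [tsum_mul_left, tail_two] at key
  linarith [tail y]

theorem exp_sub_exp_le_mul_exp (x y : ℝ) : exp y - exp x ≤ (y - x) * exp y := by
  have h : exp x = exp (x - y) * exp y := by rw [← exp_add, sub_add_cancel]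
  nlinarith [add_one_le_exp (x - y), exp_pos y]

theorem exp_two_sub_three_le_two_mul_exp_one : exp 2 - 3 ≤ 2 * exp 1 := by
  have h : exp 2 = exp 1 ^ 2 := by rw [← exp_nat_mul]; norm_num
  nlinarith [exp_one_lt_d9, exp_pos 1]

theorem exp_add_div_two_le (u v : ℝ) : exp ((u + v) / 2) ≤ (exp u + exp v) / 2 := by
  have hu : exp u = exp (u / 2) ^ 2 := by rw [sq, ← exp_add, add_halves]
  have hv : exp v = exp (v / 2) ^ 2 := by rw [sq, ← exp_add, add_halves]
  have huv : exp ((u + v) / 2) = exp (u / 2) * exp (v / 2) := by rw [← exp_add, add_div]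
  nlinarith [sq_nonneg (exp (u / 2) - exp (v / 2))]

end Real

variable {Ω : Type*} {m0 : MeasurableSpace Ω} {μ : Measure Ω}

theorem integrable_exp_of_ae_le [IsFiniteMeasure μ] {f : Ω → ℝ} (hf : AEMeasurable f μ) (C : ℝ)
    (hfC : ∀ᵐ ω ∂μ, f ω ≤ C) : Integrable (fun ω => exp (f ω)) μ :=
  .of_bound hf.exp.aestronglyMeasurable (exp C) <| by
    filter_upwards [hfC] with ω h
    rw [norm_of_nonneg (exp_pos _).le]
    exact exp_le_exp.2 h

theorem integral_mul_condExp_of_bound [IsFiniteMeasure μ] {m : MeasurableSpace Ω} (hm : m ≤ m0)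
    {f g : Ω → ℝ} (hf : StronglyMeasurable[m] f) (hg : Integrable g μ) (C : ℝ)
    (hfC : ∀ᵐ ω ∂μ, ‖f ω‖ ≤ C) :
    ∫ ω, f ω * (μ[g|m]) ω ∂μ = ∫ ω, f ω * g ω ∂μ := by
  calc ∫ ω, f ω * (μ[g|m]) ω ∂μ = ∫ ω, (μ[f * g|m]) ω ∂μ :=
        integral_congr_ae (condExp_stronglyMeasurable_mul_of_bound hm hf hg C hfC).symm
    _ = ∫ ω, f ω * g ω ∂μ := integral_condExp hm

noncomputable def compensator (μ : Measure Ω) (ℱ : Filtration ℕ m0) (U : ℕ → Ω → ℝ) (n : ℕ)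
    (ω : Ω) : ℝ :=
  ∑ j ∈ range n, (μ[U (j + 1)|ℱ j]) ω

section Compensator

variable {ℱ : Filtration ℕ m0} {U : ℕ → Ω → ℝ}

@[simp]
theorem compensator_zero : compensator μ ℱ U 0 = 0 := by
  funext ω; simp [compensator]

theorem compensator_succ (n : ℕ) (ω : Ω) :
    compensator μ ℱ U (n + 1) ω = compensator μ ℱ U n ω + (μ[U (n + 1)|ℱ n]) ω :=
  sum_range_succ _ n

theorem stronglyMeasurable_compensator_succ (n : ℕ) :
    StronglyMeasurable[ℱ n] (compensator μ ℱ U (n + 1)) :=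
  stronglyMeasurable_fun_sum _ fun _ hj =>
    stronglyMeasurable_condExp.mono (ℱ.mono (Nat.lt_succ_iff.1 (mem_range.1 hj)))

theorem measurable_compensator (n : ℕ) : Measurable (compensator μ ℱ U n) :=
  measurable_fun_sum _ fun j _ => (stronglyMeasurable_condExp.mono (ℱ.le j)).measurable

theorem ae_monotone_compensator (hU : ∀ j, 0 ≤ᵐ[μ] U (j + 1)) :
    ∀ᵐ ω ∂μ, Monotone fun n => compensator μ ℱ U n ω := by
  filter_upwards [ae_all_iff.2 fun j => condExp_nonneg (m := ℱ j) (hU j)] with ω hω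
  exact monotone_nat_of_le_succ fun n => by
    rw [compensator_succ]; exact le_add_of_nonneg_right (hω n)

theorem ae_compensator_nonneg (hU : ∀ j, 0 ≤ᵐ[μ] U (j + 1)) :
    ∀ᵐ ω ∂μ, ∀ n, 0 ≤ compensator μ ℱ U n ω := by
  filter_upwards [ae_monotone_compensator hU] with ω hω n
  simpa using hω (Nat.zero_le n)

theorem ae_compensator_le [IsFiniteMeasure μ] {l : ℝ} (hU_int : ∀ j, Integrable (U (j + 1)) μ)
    (hU : ∀ j, 0 ≤ᵐ[μ] U (j + 1)) (hU_sum : ∀ n, ∀ᵐ ω ∂μ, ∑ j ∈ range n, U (j + 1) ω ≤ l) :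
    ∀ᵐ ω ∂μ, ∀ n, compensator μ ℱ U n ω ≤ n * l := by
  have hU_le (j : ℕ) : U (j + 1) ≤ᵐ[μ] fun _ => l := by
    filter_upwards [hU_sum (j + 1), ae_all_iff.2 hU] with ω hsum hnonneg
    exact (single_le_sum (f := fun i => U (i + 1) ω) (fun i _ => hnonneg i)
      (self_mem_range_succ j)).trans hsum
  have hV_le (j : ℕ) : μ[U (j + 1)|ℱ j] ≤ᵐ[μ] fun _ => l :=
    (condExp_mono (hU_int j) (integrable_const l) (hU_le j)).trans_eq
      (condExp_const (ℱ.le j) l).eventuallyEq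
  filter_upwards [ae_all_iff.2 hV_le] with ω hω n
  simpa [compensator] using sum_le_sum fun j (_ : j ∈ range n) => hω j

theorem integrable_exp_mul_compensator [IsFiniteMeasure μ] {l θ : ℝ}
    (hU_int : ∀ j, Integrable (U (j + 1)) μ) (hU : ∀ j, 0 ≤ᵐ[μ] U (j + 1))
    (hU_sum : ∀ n, ∀ᵐ ω ∂μ, ∑ j ∈ range n, U (j + 1) ω ≤ l) (hθ : 0 ≤ θ) (n : ℕ) :
    Integrable (fun ω => exp (θ * compensator μ ℱ U n ω)) μ :=
  integrable_exp_of_ae_le ((measurable_compensator n).aemeasurable.const_mul θ) (θ * (n * l)) <| by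
    filter_upwards [ae_compensator_le hU_int hU hU_sum] with ω h
    exact mul_le_mul_of_nonneg_left (h n) hθ

theorem exp_mul_compensator_sub_one_le (θ : ℝ) (n : ℕ) (ω : Ω) :
    exp (θ * compensator μ ℱ U n ω) - 1 ≤
      ∑ j ∈ range n, θ * (exp (θ * compensator μ ℱ U (j + 1) ω) * (μ[U (j + 1)|ℱ j]) ω) := by
  calc _ = ∑ j ∈ range n,
        (exp (θ * compensator μ ℱ U (j + 1) ω) - exp (θ * compensator μ ℱ U j ω)) := by
        rw [sum_range_sub (fun m => exp (θ * compensator μ ℱ U m ω))]; simp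
    _ ≤ _ := sum_le_sum fun j _ =>
        (exp_sub_exp_le_mul_exp _ _).trans_eq (by rw [compensator_succ]; ring)

theorem ae_sum_exp_mul_compensator_mul_le {l θ : ℝ} (hU : ∀ j, 0 ≤ᵐ[μ] U (j + 1))
    (hU_sum : ∀ n, ∀ᵐ ω ∂μ, ∑ j ∈ range n, U (j + 1) ω ≤ l) (hθ : 0 ≤ θ) (n : ℕ) :
    ∀ᵐ ω ∂μ, ∑ j ∈ range n, exp (θ * compensator μ ℱ U (j + 1) ω) * U (j + 1) ω ≤
      l * exp (θ * compensator μ ℱ U n ω) := by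
  filter_upwards [ae_monotone_compensator (ℱ := ℱ) hU, ae_all_iff.2 hU, hU_sum n]
    with ω hmono hnonneg hsum
  calc _ ≤ ∑ j ∈ range n, exp (θ * compensator μ ℱ U n ω) * U (j + 1) ω :=
        sum_le_sum fun j hj => mul_le_mul_of_nonneg_right
          (exp_le_exp.2 (mul_le_mul_of_nonneg_left (hmono (mem_range.1 hj)) hθ)) (hnonneg j)
    _ ≤ l * exp (θ * compensator μ ℱ U n ω) := by
        rw [← mul_sum, mul_comm]
        exact mul_le_mul_of_nonneg_right hsum (exp_pos _).le

theorem integral_exp_mul_compensator_le [IsProbabilityMeasure μ] {l θ : ℝ}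
    (hU_int : ∀ j, Integrable (U (j + 1)) μ) (hU : ∀ j, 0 ≤ᵐ[μ] U (j + 1))
    (hU_sum : ∀ n, ∀ᵐ ω ∂μ, ∑ j ∈ range n, U (j + 1) ω ≤ l) (hθ : 0 ≤ θ) (hθl : θ * l < 1)
    (n : ℕ) : ∫ ω, exp (θ * compensator μ ℱ U n ω) ∂μ ≤ (1 - θ * l)⁻¹ := by
  set E : ℕ → Ω → ℝ := fun m ω => exp (θ * compensator μ ℱ U m ω)
  have hE_bound (m : ℕ) : ∀ᵐ ω ∂μ, ‖E m ω‖ ≤ exp (θ * (m * l)) := by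
    filter_upwards [ae_compensator_le (ℱ := ℱ) hU_int hU hU_sum] with ω h
    rw [norm_of_nonneg (exp_pos _).le]
    exact exp_le_exp.2 (mul_le_mul_of_nonneg_left (h m) hθ)
  have hE_int (m : ℕ) : Integrable (E m) μ := integrable_exp_mul_compensator hU_int hU hU_sum hθ m
  have hEU_int : Integrable (fun ω => ∑ j ∈ range n, E (j + 1) ω * U (j + 1) ω) μ :=
    integrable_finsetSum _ fun j _ => (hU_int j).bdd_mul (hE_int _).1 (hE_bound _)
  have hEV_int (j : ℕ) : Integrable (fun ω => θ * (E (j + 1) ω * (μ[U (j + 1)|ℱ j]) ω)) μ :=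
    (integrable_condExp.bdd_mul (hE_int _).1 (hE_bound _)).const_mul θ
  have hE_sm (j : ℕ) : StronglyMeasurable[ℱ j] (E (j + 1)) :=
    continuous_exp.comp_stronglyMeasurable ((stronglyMeasurable_compensator_succ j).const_mul θ)
  have key : ∫ ω, E n ω ∂μ - 1 ≤ θ * l * ∫ ω, E n ω ∂μ := calc
    _ = ∫ ω, (E n ω - 1) ∂μ := by rw [integral_sub (hE_int n) (integrable_const 1)]; simp
    _ ≤ ∫ ω, ∑ j ∈ range n, θ * (E (j + 1) ω * (μ[U (j + 1)|ℱ j]) ω) ∂μ :=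
        integral_mono ((hE_int n).sub (integrable_const 1))
          (integrable_finsetSum _ fun j _ => hEV_int j) (exp_mul_compensator_sub_one_le θ n)
    _ = θ * ∫ ω, ∑ j ∈ range n, E (j + 1) ω * U (j + 1) ω ∂μ := by
        rw [integral_finsetSum _ fun j _ => hEV_int j, integral_finsetSum _ fun j _ =>
          (hU_int j).bdd_mul (hE_int _).1 (hE_bound _), mul_sum]
        refine sum_congr rfl fun j _ => ?_
        rw [integral_const_mul,
          integral_mul_condExp_of_bound (ℱ.le j) (hE_sm j) (hU_int j) _ (hE_bound _)]
    _ ≤ θ * ∫ ω, l * E n ω ∂μ := mul_le_mul_of_nonneg_left (integral_mono_ae hEU_int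
        ((hE_int n).const_mul l) (ae_sum_exp_mul_compensator_mul_le hU hU_sum hθ n)) hθ
    _ = θ * l * ∫ ω, E n ω ∂μ := by rw [integral_const_mul, mul_assoc]
  rw [← one_div, le_div_iff₀ (by linarith)]
  linarith

end Compensator

section Martingale

variable {ℱ : Filtration ℕ m0} {M U : ℕ → Ω → ℝ} {c t : ℝ}

theorem MeasureTheory.Martingale.condExp_sub_succ_ae_eq_zero (hM : Martingale M ℱ μ) (n : ℕ) :
    μ[M (n + 1) - M n|ℱ n] =ᵐ[μ] 0 := by
  filter_upwards [condExp_sub (m := ℱ n) (hM.integrable (n + 1)) (hM.integrable n),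
    hM.condExp_ae_eq n.le_succ, hM.condExp_ae_eq (le_refl n)] with ω h h_succ h_self
  simp [h, h_succ, h_self]

theorem condExp_exp_mul_sub_succ_le [IsFiniteMeasure μ] {V : Ω → ℝ} (hM : Martingale M ℱ μ)
    (n : ℕ) (ht : 0 ≤ t) (htc : t * c ≤ 2) (hΔ : ∀ᵐ ω ∂μ, |M (n + 1) ω - M n ω| ≤ c)
    (hV : μ[fun ω => (M (n + 1) ω - M n ω) ^ 2|ℱ n] ≤ᵐ[μ] V) :
    μ[fun ω => exp (t * (M (n + 1) ω - M n ω))|ℱ n]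
      ≤ᵐ[μ] fun ω => exp ((exp 2 - 3) / 4 * t ^ 2 * V ω) := by
  set κ := (exp 2 - 3) / 4 * t ^ 2
  set Δ : Ω → ℝ := M (n + 1) - M n
  set Δsq : Ω → ℝ := fun ω => Δ ω ^ 2
  have hΔ_int : Integrable Δ μ := (hM.integrable _).sub (hM.integrable _)
  have hΔsq_int : Integrable Δsq μ := .of_bound (hΔ_int.1.pow 2) (c ^ 2) <| by
    filter_upwards [hΔ] with ω h
    rw [norm_pow, Real.norm_eq_abs]
    exact pow_le_pow_left₀ (abs_nonneg _) h 2
  have htΔ : ∀ᵐ ω ∂μ, |t * Δ ω| ≤ 2 := by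
    filter_upwards [hΔ] with ω h
    rw [abs_mul, abs_of_nonneg ht]
    exact (mul_le_mul_of_nonneg_left h ht).trans htc
  have hG_int : Integrable (fun ω => exp (t * Δ ω)) μ :=
    integrable_exp_of_ae_le (hΔ_int.aemeasurable.const_mul t) 2 <| by
      filter_upwards [htΔ] with ω h using (le_abs_self _).trans h
  have hQ_int : Integrable ((fun _ => 1) + t • Δ + κ • Δsq) μ :=
    ((integrable_const 1).add (hΔ_int.smul t)).add (hΔsq_int.smul κ)
  have hGQ : (fun ω => exp (t * Δ ω)) ≤ᵐ[μ] (fun _ => 1) + t • Δ + κ • Δsq := by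
    filter_upwards [htΔ] with ω h
    convert exp_le_one_add_add_mul_sq h using 1
    simp only [Pi.add_apply, Pi.smul_apply, smul_eq_mul, Δsq, κ]
    ring
  filter_upwards [condExp_mono hG_int hQ_int hGQ,
    condExp_add ((integrable_const 1).add (hΔ_int.smul t)) (hΔsq_int.smul κ) (ℱ n),
    condExp_add (integrable_const 1) (hΔ_int.smul t) (ℱ n), condExp_smul t Δ (ℱ n),
    condExp_smul κ Δsq (ℱ n), hM.condExp_sub_succ_ae_eq_zero n, hV]
    with ω hmono hadd hadd' hsmul hsmul' hzero hV
  have hκ : 0 ≤ κ := mul_nonneg (by linarith [add_one_le_exp 2]) (sq_nonneg t)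
  have hΔ0 : μ[Δ|ℱ n] ω = 0 := hzero
  have hΔsq : μ[Δsq|ℱ n] ω ≤ V ω := hV
  rw [hadd, Pi.add_apply, hadd', Pi.add_apply, hsmul, hsmul', condExp_const (ℱ.le n)] at hmono
  simp only [Pi.smul_apply, smul_eq_mul, hΔ0] at hmono
  show μ[fun ω => exp (t * Δ ω)|ℱ n] ω ≤ exp (κ * V ω)
  calc _ ≤ 1 + κ * V ω := by nlinarith
    _ ≤ exp (κ * V ω) := by linarith [add_one_le_exp (κ * V ω)]

theorem ae_mul_sub_sub_mul_compensator_le {κ : ℝ} (ht : 0 ≤ t) (hκ : 0 ≤ κ)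
    (hΔ : ∀ j, ∀ᵐ ω ∂μ, |M (j + 1) ω - M j ω| ≤ c) (hU : ∀ j, 0 ≤ᵐ[μ] U (j + 1)) (m k : ℕ) :
    ∀ᵐ ω ∂μ, t * (M m ω - M 0 ω) - κ * compensator μ ℱ U k ω ≤ t * (m * c) := by
  filter_upwards [ae_all_iff.2 hΔ, ae_compensator_nonneg (ℱ := ℱ) hU] with ω hΔω hA
  have hdrift : M m ω - M 0 ω ≤ m * c := by
    rw [← sum_range_sub (fun j => M j ω)]
    simpa using sum_le_sum fun j (_ : j ∈ range m) => (le_abs_self _).trans (hΔω j)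
  nlinarith [mul_le_mul_of_nonneg_left hdrift ht, mul_nonneg hκ (hA k)]

theorem integrable_exp_mul_sub_sub_mul_compensator [IsFiniteMeasure μ] {κ : ℝ}
    (hM : Martingale M ℱ μ) (ht : 0 ≤ t) (hκ : 0 ≤ κ)
    (hΔ : ∀ j, ∀ᵐ ω ∂μ, |M (j + 1) ω - M j ω| ≤ c) (hU : ∀ j, 0 ≤ᵐ[μ] U (j + 1)) (m k : ℕ) :
    Integrable (fun ω => exp (t * (M m ω - M 0 ω) - κ * compensator μ ℱ U k ω)) μ :=
  integrable_exp_of_ae_le ((((hM.integrable m).aemeasurable.sub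
    (hM.integrable 0).aemeasurable).const_mul t).sub
      ((measurable_compensator k).aemeasurable.const_mul κ)) _
    (ae_mul_sub_sub_mul_compensator_le ht hκ hΔ hU m k)

theorem integral_exp_sub_compensator_le_one [IsProbabilityMeasure μ] (hM : Martingale M ℱ μ)
    (ht : 0 ≤ t) (htc : t * c ≤ 2) (hΔ : ∀ j, ∀ᵐ ω ∂μ, |M (j + 1) ω - M j ω| ≤ c)
    (hU : ∀ j, 0 ≤ᵐ[μ] U (j + 1))
    (hcond : ∀ j, μ[fun ω => (M (j + 1) ω - M j ω) ^ 2|ℱ j] ≤ᵐ[μ] μ[U (j + 1)|ℱ j]) (n : ℕ) :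
    ∫ ω, exp (t * (M n ω - M 0 ω) - (exp 2 - 3) / 4 * t ^ 2 * compensator μ ℱ U n ω) ∂μ ≤ 1 := by
  set κ := (exp 2 - 3) / 4 * t ^ 2
  have hκ : 0 ≤ κ := mul_nonneg (by linarith [add_one_le_exp 2]) (sq_nonneg t)
  induction n with
  | zero => simp
  | succ n ih =>
    set F : Ω → ℝ := fun ω => exp (t * (M n ω - M 0 ω) - κ * compensator μ ℱ U (n + 1) ω)
    set G : Ω → ℝ := fun ω => exp (t * (M (n + 1) ω - M n ω))
    have hF_sm : StronglyMeasurable[ℱ n] F :=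
      continuous_exp.comp_stronglyMeasurable ((((hM.stronglyAdapted n).sub
        ((hM.stronglyAdapted 0).mono (ℱ.mono n.zero_le))).const_mul t).sub
        ((stronglyMeasurable_compensator_succ n).const_mul κ))
    have hF_bound : ∀ᵐ ω ∂μ, ‖F ω‖ ≤ exp (t * (n * c)) := by
      filter_upwards [ae_mul_sub_sub_mul_compensator_le ht hκ hΔ hU n (n + 1)] with ω h
      rw [norm_of_nonneg (exp_pos _).le]
      exact exp_le_exp.2 h
    have hG_int : Integrable G μ :=
      integrable_exp_of_ae_le (((hM.integrable _).sub (hM.integrable _)).aemeasurable.const_mul t)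
        (t * c) <| by
        filter_upwards [hΔ n] with ω h
        exact mul_le_mul_of_nonneg_left ((le_abs_self _).trans h) ht
    calc _ = ∫ ω, F ω * G ω ∂μ := by
          congr 1 with ω
          rw [← exp_add]; ring_nf
      _ = ∫ ω, F ω * (μ[G|ℱ n]) ω ∂μ :=
          (integral_mul_condExp_of_bound (ℱ.le n) hF_sm hG_int _ hF_bound).symm
      _ ≤ ∫ ω, exp (t * (M n ω - M 0 ω) - κ * compensator μ ℱ U n ω) ∂μ := by
          refine integral_mono_ae
            (integrable_condExp.bdd_mul (hF_sm.mono (ℱ.le n)).aestronglyMeasurable hF_bound)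
            (integrable_exp_mul_sub_sub_mul_compensator hM ht hκ hΔ hU n n) ?_
          filter_upwards [condExp_exp_mul_sub_succ_le hM n ht htc (hΔ n) (hcond n)] with ω h
          calc F ω * (μ[G|ℱ n]) ω ≤ F ω * exp (κ * (μ[U (n + 1)|ℱ n]) ω) :=
                mul_le_mul_of_nonneg_left h (exp_pos _).le
            _ = _ := by rw [← exp_add, compensator_succ]; ring_nf
      _ ≤ 1 := ih

theorem measure_sub_gt_le_exp [IsProbabilityMeasure μ] {l : ℝ} (hM : Martingale M ℱ μ)
    (ht : 0 ≤ t) (htc : t * c ≤ 2) (htl : (exp 2 - 3) / 4 * t ^ 2 * l ≤ 1 / 2)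
    (hΔ : ∀ j, ∀ᵐ ω ∂μ, |M (j + 1) ω - M j ω| ≤ c) (hU_int : ∀ j, Integrable (U (j + 1)) μ)
    (hU : ∀ j, 0 ≤ᵐ[μ] U (j + 1)) (hU_sum : ∀ n, ∀ᵐ ω ∂μ, ∑ j ∈ range n, U (j + 1) ω ≤ l)
    (hcond : ∀ j, μ[fun ω => (M (j + 1) ω - M j ω) ^ 2|ℱ j] ≤ᵐ[μ] μ[U (j + 1)|ℱ j])
    (n : ℕ) (ε : ℝ) :
    μ {ω | ε < M n ω - M 0 ω} ≤ ENNReal.ofReal (3 / 2 * exp (-(t / 2) * ε)) := by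
  set κ := (exp 2 - 3) / 4 * t ^ 2
  set A := compensator μ ℱ U n
  set Z : Ω → ℝ := fun ω => exp (t * (M n ω - M 0 ω) - κ * A ω)
  have hκ : 0 ≤ κ := mul_nonneg (by linarith [add_one_le_exp 2]) (sq_nonneg t)
  have hZ : ∫ ω, Z ω ∂μ ≤ 1 := integral_exp_sub_compensator_le_one hM ht htc hΔ hU hcond n
  have hA : ∫ ω, exp (κ * A ω) ∂μ ≤ 2 :=
    (integral_exp_mul_compensator_le hU_int hU hU_sum hκ (by linarith) n).trans <| by
      rw [inv_le_comm₀ (by linarith) two_pos]; linarith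
  have hconvex (ω : Ω) : exp (t / 2 * (M n ω - M 0 ω)) ≤ (Z ω + exp (κ * A ω)) / 2 := by
    convert exp_add_div_two_le (t * (M n ω - M 0 ω) - κ * A ω) (κ * A ω) using 2; ring
  have hZ_int : Integrable Z μ := integrable_exp_mul_sub_sub_mul_compensator hM ht hκ hΔ hU n n
  have hA_int : Integrable (fun ω => exp (κ * A ω)) μ :=
    integrable_exp_mul_compensator hU_int hU hU_sum hκ n
  have hsum_int : Integrable (fun ω => (Z ω + exp (κ * A ω)) / 2) μ :=
    (hZ_int.add hA_int).div_const 2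
  have hmgf_int : Integrable (fun ω => exp (t / 2 * (M n ω - M 0 ω))) μ :=
    hsum_int.mono'
      (((hM.integrable n).sub (hM.integrable 0)).aemeasurable.const_mul _).exp.aestronglyMeasurable
      (ae_of_all _ fun ω => by rw [norm_of_nonneg (exp_pos _).le]; exact hconvex ω)
  have hmgf : mgf (fun ω => M n ω - M 0 ω) μ (t / 2) ≤ 3 / 2 := calc
    _ ≤ ∫ ω, (Z ω + exp (κ * A ω)) / 2 ∂μ := integral_mono hmgf_int hsum_int hconvex
    _ ≤ 3 / 2 := by
      rw [integral_div, integral_add hZ_int hA_int]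
      linarith
  calc μ {ω | ε < M n ω - M 0 ω} ≤ μ {ω | ε ≤ M n ω - M 0 ω} :=
        measure_mono fun _ h => Set.mem_ofPred.2 (le_of_lt h)
    _ = ENNReal.ofReal (μ.real {ω | ε ≤ M n ω - M 0 ω}) := (ofReal_measureReal).symm
    _ ≤ _ := by
      refine ENNReal.ofReal_le_ofReal
        ((measure_ge_le_exp_mul_mgf ε (by positivity) hmgf_int).trans ?_)
      rw [mul_comm]
      exact mul_le_mul_of_nonneg_right hmgf (exp_pos _).le

end Martingale

/-- **Martingale concentration (simplification of Kesten's Theorem 3), finite-time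
version.** There is a universal constant `C > 0` such that: for every probability
space with filtration `ℱ`, every martingale `M` with increments `Δ_k = M_k - M_{k-1}`,
every choice of nonnegative integrable measurable random variables `U_k` (`k ≥ 1`)
and constants `c > 0`, `l₀ ≥ c²/(4e)` satisfying `|Δ_k| ≤ c` a.s.,
`E[Δ_k² | ℱ_{k-1}] ≤ E[U_k | ℱ_{k-1}]` a.s., and `Σ_{k=1}^K U_k ≤ l₀` a.s. for every
`K`, one has `ℙ(M_K - M_0 > ε) ≤ C exp(-ε/(2√(e l₀)))` for every `K` and `ε ≥ 0`. -/
theorem martingale_concentration_finite :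
    ∃ C : ℝ, 0 < C ∧
      ∀ (Ω : Type) [m0 : MeasurableSpace Ω] (μ : Measure Ω),
        IsProbabilityMeasure μ →
        ∀ (ℱ : Filtration ℕ m0) (M U : ℕ → Ω → ℝ) (c l₀ : ℝ),
          Martingale M ℱ μ →
          0 < c → c ^ 2 / (4 * Real.exp 1) ≤ l₀ →
          (∀ k : ℕ, 1 ≤ k → ∀ᵐ ω ∂μ, |M k ω - M (k - 1) ω| ≤ c) →
          (∀ k : ℕ, 1 ≤ k → Measurable (U k)) →
          (∀ k : ℕ, 1 ≤ k → Integrable (U k) μ) →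
          (∀ k : ℕ, 1 ≤ k → ∀ᵐ ω ∂μ, 0 ≤ U k ω) →
          (∀ k : ℕ, 1 ≤ k → ∀ᵐ ω ∂μ,
            (μ[fun ω' => (M k ω' - M (k - 1) ω') ^ 2|ℱ (k - 1)]) ω ≤
              (μ[U k|ℱ (k - 1)]) ω) →
          (∀ K : ℕ, ∀ᵐ ω ∂μ, ∑ k ∈ Finset.Icc 1 K, U k ω ≤ l₀) →
          ∀ (K : ℕ) (ε : ℝ), 0 ≤ ε →
            μ {ω | ε < M K ω - M 0 ω} ≤
              ENNReal.ofReal (C * Real.exp (-ε / (2 * Real.sqrt (Real.exp 1 * l₀)))) := by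
  refine ⟨3 / 2, by norm_num, fun Ω _ μ _ ℱ M U c l₀ hM hc hcl hΔ _ hU_int hU hcond hsum K ε _ =>
    ?_⟩
  have hl₀ : 0 < l₀ := lt_of_lt_of_le (by positivity) hcl
  set s := √(exp 1 * l₀)
  have hs : 0 < s := sqrt_pos.2 (by positivity)
  have hs_sq : s ^ 2 = exp 1 * l₀ := sq_sqrt (by positivity)
  have htc : 1 / s * c ≤ 2 := by
    rw [div_le_iff₀ (by positivity)] at hcl
    rw [one_div_mul_eq_div, div_le_iff₀ hs]
    nlinarith
  have htl : (exp 2 - 3) / 4 * (1 / s) ^ 2 * l₀ ≤ 1 / 2 := by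
    have : (exp 2 - 3) / 4 * (1 / s) ^ 2 * l₀ = (exp 2 - 3) / (4 * exp 1) := by
      rw [one_div_pow, hs_sq]; field_simp
    rw [this, div_le_iff₀ (by positivity)]
    linarith [exp_two_sub_three_le_two_mul_exp_one]
  convert measure_sub_gt_le_exp hM (by positivity) htc htl
    (fun j => by simpa using hΔ (j + 1) j.succ_pos)
    (fun j => hU_int (j + 1) j.succ_pos) (fun j => hU (j + 1) j.succ_pos)
    (fun n => by
      filter_upwards [hsum n] with ω h
      rwa [range_eq_Ico, sum_Ico_add' (fun k => U k ω), zero_add, Ico_add_one_right_eq_Icc])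
    (fun j => by
      have h := hcond (j + 1) j.succ_pos
      simp only [add_tsub_cancel_right] at h
      exact h) K ε using 4
  ring
end

section
/- Let (Ω, ℱ, ℙ) be a probability space with filtration {ℱ_k}_{k≥0}, let K ∈ ℕ, and let U_1, …, U_K be nonnegative integrable ℱ-measurable random variables such that Σ_{k=1}^K U_k ≤ λ_0 almost surely for a constant λ_0 > 0. Set A_K := Σ_{k=1}^K E[U_k | ℱ_{k−1}]. Then for every integer r ≥ 1 the moment bound E[A_K^r] ≤ r!·λ_0^r holds. -/
/-!
Let `A n = ∑_{i<n} E[X_{i+1} - X_i | ℱ_i]` be the predictable part of the increasing process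
`X n = ∑_{k ≤ n} U_k`. Since `A` is nondecreasing,
`A_K^{q+1} ≤ (q+1) ∑_{k<K} A_{k+1}^q (A_{k+1} - A_k)`. As `A_{k+1}` is `ℱ_k`-measurable, in
expectation the increment `A_{k+1} - A_k = E[X_{k+1} - X_k | ℱ_k]` may be replaced by
`X_{k+1} - X_k`, whence `E[A_K^{q+1}] ≤ (q+1) E[A_K^q (X_K - X_0)] ≤ (q+1) λ₀ E[A_K^q]`.
Induction on `q` gives `E[A_K^r] ≤ r! λ₀^r`.
-/

open MeasureTheory

theorem Monotone.pow_succ_sub_pow_succ_le_sum {s : ℕ → ℝ} (hs : Monotone s) (h0 : 0 ≤ s 0)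
    (q K : ℕ) :
    s K ^ (q + 1) - s 0 ^ (q + 1) ≤
      (q + 1) * ∑ k ∈ Finset.range K, s (k + 1) ^ q * (s (k + 1) - s k) := by
  rw [← Finset.sum_range_sub (fun n => s n ^ (q + 1)), Finset.mul_sum]
  refine Finset.sum_le_sum fun k _ => ?_
  have hk : 0 ≤ s k := h0.trans (hs k.zero_le)
  have hk1 : s k ≤ s (k + 1) := hs k.le_succ
  calc s (k + 1) ^ (q + 1) - s k ^ (q + 1) ≤ |s (k + 1) ^ (q + 1) - s k ^ (q + 1)| := le_abs_self _
    _ ≤ |s (k + 1) - s k| * ↑(q + 1) * max |s (k + 1)| |s k| ^ (q + 1 - 1) :=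
      abs_pow_sub_pow_le _ _ _
    _ = (q + 1) * (s (k + 1) ^ q * (s (k + 1) - s k)) := by
      rw [abs_of_nonneg (sub_nonneg.2 hk1), abs_of_nonneg hk, abs_of_nonneg (hk.trans hk1),
        max_eq_left hk1, Nat.add_sub_cancel]
      push_cast; ring

namespace MeasureTheory

theorem integral_mul_condExp_of_stronglyMeasurable {Ω : Type*} {m m0 : MeasurableSpace Ω}
    {μ : Measure Ω} (hm : m ≤ m0) [SigmaFinite (μ.trim hm)] {f g : Ω → ℝ}
    (hf : StronglyMeasurable[m] f) (hfg : Integrable (f * g) μ) (hg : Integrable g μ) :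
    ∫ ω, f ω * (μ[g|m]) ω ∂μ = ∫ ω, f ω * g ω ∂μ :=
  calc ∫ ω, f ω * (μ[g|m]) ω ∂μ = ∫ ω, (μ[f * g|m]) ω ∂μ :=
        integral_congr_ae (condExp_mul_of_stronglyMeasurable_left hf hfg hg).symm
    _ = ∫ ω, f ω * g ω ∂μ := integral_condExp hm

section IncreasingProcess

variable {Ω : Type*} {m0 : MeasurableSpace Ω} {μ : Measure Ω} {ℱ : Filtration ℕ m0}
  {X : ℕ → Ω → ℝ} {K : ℕ} {c : ℝ}

theorem ae_monotone_predictablePart (hX : ∀ᵐ ω ∂μ, Monotone (X · ω)) :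
    ∀ᵐ ω ∂μ, Monotone (predictablePart X ℱ μ · ω) := by
  have hincr : ∀ n, 0 ≤ᵐ[μ] μ[X (n + 1) - X n|ℱ n] := fun n =>
    condExp_nonneg <| hX.mono fun ω hω => sub_nonneg.2 (hω n.le_succ)
  filter_upwards [ae_all_iff.2 hincr] with ω hω
  refine monotone_nat_of_le_succ fun n => ?_
  rw [predictablePart_add_one, Pi.add_apply]
  exact le_add_of_nonneg_right (hω n)

theorem ae_predictablePart_pow_succ_le_sum (hX : ∀ᵐ ω ∂μ, Monotone (X · ω)) (q : ℕ) :
    ∀ᵐ ω ∂μ, predictablePart X ℱ μ K ω ^ (q + 1) ≤ (q + 1) * ∑ k ∈ Finset.range K,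
      predictablePart X ℱ μ (k + 1) ω ^ q * (μ[X (k + 1) - X k|ℱ k]) ω := by
  filter_upwards [ae_monotone_predictablePart (ℱ := ℱ) hX] with ω hω
  have hincr : ∀ k, predictablePart X ℱ μ (k + 1) ω - predictablePart X ℱ μ k ω =
      (μ[X (k + 1) - X k|ℱ k]) ω := fun k => by
    rw [predictablePart_add_one, Pi.add_apply, add_sub_cancel_left]
  simpa [hincr] using hω.pow_succ_sub_pow_succ_le_sum (by simp) q K

variable [IsFiniteMeasure μ]

theorem ae_predictablePart_le (hint : ∀ n, Integrable (X n) μ)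
    (hX : ∀ᵐ ω ∂μ, Monotone (X · ω)) (hbound : ∀ᵐ ω ∂μ, X K ω - X 0 ω ≤ c) :
    ∀ᵐ ω ∂μ, predictablePart X ℱ μ K ω ≤ K * c := by
  have hincr : ∀ i < K, μ[X (i + 1) - X i|ℱ i] ≤ᵐ[μ] fun _ => c := fun i hi =>
    calc μ[X (i + 1) - X i|ℱ i] ≤ᵐ[μ] μ[fun _ => c|ℱ i] := by
          refine condExp_mono ((hint _).sub (hint _)) (integrable_const c) ?_
          filter_upwards [hX, hbound] with ω hω hωc
          exact (sub_le_sub (hω (Nat.succ_le_of_lt hi)) (hω i.zero_le)).trans hωc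
      _ = fun _ => c := condExp_const (ℱ.le i) c
  filter_upwards [(Filter.eventually_all_finset (Finset.range K)).2
    fun i hi => hincr i (Finset.mem_range.1 hi)] with ω hω
  calc predictablePart X ℱ μ K ω = ∑ i ∈ Finset.range K, (μ[X (i + 1) - X i|ℱ i]) ω :=
        Finset.sum_apply _ _ _
    _ ≤ ∑ _i ∈ Finset.range K, c := Finset.sum_le_sum hω
    _ = K * c := by simp

theorem integrable_predictablePart_pow_mul (hint : ∀ n, Integrable (X n) μ)
    (hX : ∀ᵐ ω ∂μ, Monotone (X · ω)) (hbound : ∀ᵐ ω ∂μ, X K ω - X 0 ω ≤ c) {n : ℕ} (hn : n ≤ K)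
    (q : ℕ) {g : Ω → ℝ} (hg : Integrable g μ) :
    Integrable (fun ω => predictablePart X ℱ μ n ω ^ q * g ω) μ := by
  refine hg.bdd_mul (c := (K * c) ^ q)
    (((stronglyAdapted_predictablePart' n).mono (ℱ.le n)).pow q).aestronglyMeasurable ?_
  filter_upwards [ae_monotone_predictablePart hX, ae_predictablePart_le hint hX hbound]
    with ω hω hωK
  have h0 : 0 ≤ predictablePart X ℱ μ n ω := by simpa using hω n.zero_le
  rw [Real.norm_eq_abs, abs_pow, abs_of_nonneg h0]
  exact pow_le_pow_left₀ h0 ((hω hn).trans hωK) q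

theorem integrable_predictablePart_pow (hint : ∀ n, Integrable (X n) μ)
    (hX : ∀ᵐ ω ∂μ, Monotone (X · ω)) (hbound : ∀ᵐ ω ∂μ, X K ω - X 0 ω ≤ c) (q : ℕ) :
    Integrable (fun ω => predictablePart X ℱ μ K ω ^ q) μ := by
  simpa using integrable_predictablePart_pow_mul hint hX hbound le_rfl q (integrable_const 1)

theorem integral_predictablePart_pow_mul_condExp_le (hint : ∀ n, Integrable (X n) μ)
    (hX : ∀ᵐ ω ∂μ, Monotone (X · ω)) (hbound : ∀ᵐ ω ∂μ, X K ω - X 0 ω ≤ c) {k : ℕ} (hk : k < K)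
    (q : ℕ) :
    ∫ ω, predictablePart X ℱ μ (k + 1) ω ^ q * (μ[X (k + 1) - X k|ℱ k]) ω ∂μ ≤
      ∫ ω, predictablePart X ℱ μ K ω ^ q * (X (k + 1) ω - X k ω) ∂μ := by
  have hd : Integrable (X (k + 1) - X k) μ := (hint _).sub (hint _)
  rw [integral_mul_condExp_of_stronglyMeasurable (ℱ.le k)
    (f := fun ω => predictablePart X ℱ μ (k + 1) ω ^ q) ((stronglyAdapted_predictablePart k).pow q)
    (integrable_predictablePart_pow_mul hint hX hbound hk q hd) hd]
  refine integral_mono_ae (integrable_predictablePart_pow_mul hint hX hbound hk q hd)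
    (integrable_predictablePart_pow_mul hint hX hbound le_rfl q hd) ?_
  filter_upwards [ae_monotone_predictablePart hX, hX] with ω hA hXω
  have h0 : 0 ≤ predictablePart X ℱ μ (k + 1) ω := by simpa using hA (k + 1).zero_le
  exact mul_le_mul_of_nonneg_right (pow_le_pow_left₀ h0 (hA hk) q) (sub_nonneg.2 (hXω k.le_succ))

theorem integral_predictablePart_pow_succ_le (hint : ∀ n, Integrable (X n) μ)
    (hX : ∀ᵐ ω ∂μ, Monotone (X · ω)) (hbound : ∀ᵐ ω ∂μ, X K ω - X 0 ω ≤ c) (q : ℕ) :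
    ∫ ω, predictablePart X ℱ μ K ω ^ (q + 1) ∂μ ≤
      (q + 1) * c * ∫ ω, predictablePart X ℱ μ K ω ^ q ∂μ := by
  set A := predictablePart X ℱ μ
  have hcondExp : ∀ k ∈ Finset.range K,
      Integrable (fun ω => A (k + 1) ω ^ q * (μ[X (k + 1) - X k|ℱ k]) ω) μ := fun k hk =>
    integrable_predictablePart_pow_mul hint hX hbound (Finset.mem_range.1 hk) q integrable_condExp
  have hincr : ∀ k ∈ Finset.range K,
      Integrable (fun ω => A K ω ^ q * (X (k + 1) ω - X k ω)) μ := fun k _ =>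
    integrable_predictablePart_pow_mul hint hX hbound le_rfl q ((hint _).sub (hint _))
  have hbounded : ∫ ω, A K ω ^ q * (X K ω - X 0 ω) ∂μ ≤ c * ∫ ω, A K ω ^ q ∂μ := by
    rw [← integral_const_mul]
    refine integral_mono_ae (integrable_predictablePart_pow_mul hint hX hbound le_rfl q
      ((hint _).sub (hint _))) ((integrable_predictablePart_pow hint hX hbound q).const_mul c) ?_
    filter_upwards [ae_monotone_predictablePart hX, hbound] with ω hω hωc
    have h0 : 0 ≤ A K ω := by simpa [A] using hω K.zero_le
    rw [mul_comm c]
    exact mul_le_mul_of_nonneg_left hωc (pow_nonneg h0 q)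
  calc ∫ ω, A K ω ^ (q + 1) ∂μ
      ≤ ∫ ω, (q + 1) * ∑ k ∈ Finset.range K, A (k + 1) ω ^ q * (μ[X (k + 1) - X k|ℱ k]) ω ∂μ :=
        integral_mono_ae (integrable_predictablePart_pow hint hX hbound (q + 1))
          ((integrable_finsetSum _ hcondExp).const_mul _)
          (ae_predictablePart_pow_succ_le_sum hX q)
    _ = (q + 1) * ∑ k ∈ Finset.range K,
          ∫ ω, A (k + 1) ω ^ q * (μ[X (k + 1) - X k|ℱ k]) ω ∂μ := by
        rw [integral_const_mul, integral_finsetSum _ hcondExp]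
    _ ≤ (q + 1) * ∑ k ∈ Finset.range K, ∫ ω, A K ω ^ q * (X (k + 1) ω - X k ω) ∂μ := by
        refine mul_le_mul_of_nonneg_left (Finset.sum_le_sum fun k hk => ?_) (by positivity)
        exact integral_predictablePart_pow_mul_condExp_le hint hX hbound (Finset.mem_range.1 hk) q
    _ = (q + 1) * ∫ ω, A K ω ^ q * (X K ω - X 0 ω) ∂μ := by
        rw [← integral_finsetSum _ hincr]
        congr 2 with ω
        rw [← Finset.mul_sum, Finset.sum_range_sub (X · ω)]
    _ ≤ (q + 1) * c * ∫ ω, A K ω ^ q ∂μ := by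
        rw [mul_assoc]
        gcongr

theorem integral_predictablePart_pow_le [IsProbabilityMeasure μ]
    (hint : ∀ n, Integrable (X n) μ) (hX : ∀ᵐ ω ∂μ, Monotone (X · ω))
    (hbound : ∀ᵐ ω ∂μ, X K ω - X 0 ω ≤ c) (hc : 0 ≤ c) (r : ℕ) :
    ∫ ω, predictablePart X ℱ μ K ω ^ r ∂μ ≤ r.factorial * c ^ r := by
  induction r with
  | zero => simp
  | succ q ih =>
    calc ∫ ω, predictablePart X ℱ μ K ω ^ (q + 1) ∂μ
        ≤ (q + 1) * c * ∫ ω, predictablePart X ℱ μ K ω ^ q ∂μ :=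
          integral_predictablePart_pow_succ_le hint hX hbound q
      _ ≤ (q + 1) * c * (q.factorial * c ^ q) := by gcongr
      _ = (q + 1).factorial * c ^ (q + 1) := by
          rw [Nat.factorial_succ]
          push_cast
          ring

end IncreasingProcess

end MeasureTheory

theorem condexp_sum_moment_bound_general {Ω : Type*} [m0 : MeasurableSpace Ω] (μ : Measure Ω)
    [IsProbabilityMeasure μ] (ℱ : Filtration ℕ m0) (K : ℕ) (U : ℕ → Ω → ℝ)
    (l₀ : ℝ) (hl₀ : 0 < l₀)
    (hUint : ∀ k, Integrable (U k) μ)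
    (hUnonneg : ∀ k, ∀ᵐ ω ∂μ, 0 ≤ U k ω)
    (hsum : ∀ᵐ ω ∂μ, ∑ k ∈ Finset.Icc 1 K, U k ω ≤ l₀)
    (r : ℕ) :
    ∫ ω, (∑ k ∈ Finset.Icc 1 K, (μ[U k|ℱ (k - 1)]) ω) ^ r ∂μ ≤
      (r.factorial : ℝ) * l₀ ^ r := by
  set X : ℕ → Ω → ℝ := fun n ω => ∑ k ∈ Finset.Icc 1 n, U k ω
  have hincr : ∀ i, X (i + 1) - X i = U (i + 1) := fun i => by
    ext ω
    simp [X, Finset.sum_Icc_succ_top]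
  have hA : ∀ ω, ∑ k ∈ Finset.Icc 1 K, (μ[U k|ℱ (k - 1)]) ω = predictablePart X ℱ μ K ω := by
    intro ω
    rw [← Finset.Ico_add_one_right_eq_Icc, Finset.sum_Ico_eq_sum_range]
    simp [predictablePart, hincr, add_comm 1]
  have hX : ∀ᵐ ω ∂μ, Monotone (X · ω) := by
    filter_upwards [ae_all_iff.2 hUnonneg] with ω hω m n hmn
    exact Finset.sum_le_sum_of_subset_of_nonneg (Finset.Icc_subset_Icc_right hmn)
      fun k _ _ => hω k
  have hbound : ∀ᵐ ω ∂μ, X K ω - X 0 ω ≤ l₀ := by simpa [X] using hsum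
  simp_rw [hA]
  exact integral_predictablePart_pow_le (fun n => integrable_finsetSum _ fun k _ => hUint k)
    hX hbound hl₀.le r

/-- **Moment bound for sums of conditional expectations.** Let `U_1, …, U_K` be
nonnegative integrable random variables with `Σ_{k=1}^K U_k ≤ l₀` almost surely for
a constant `l₀ > 0`, and let `A_K := Σ_{k=1}^K E[U_k | ℱ_{k-1}]`. Then for every
integer `r ≥ 1` one has `E[A_K^r] ≤ r! · l₀^r`. -/
theorem condexp_sum_moment_bound {Ω : Type*} [m0 : MeasurableSpace Ω] (μ : Measure Ω)
    [IsProbabilityMeasure μ] (ℱ : Filtration ℕ m0) (K : ℕ) (U : ℕ → Ω → ℝ)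
    (l₀ : ℝ) (hl₀ : 0 < l₀)
    (hUmeas : ∀ k, Measurable (U k)) (hUint : ∀ k, Integrable (U k) μ)
    (hUnonneg : ∀ k, ∀ᵐ ω ∂μ, 0 ≤ U k ω)
    (hsum : ∀ᵐ ω ∂μ, ∑ k ∈ Finset.Icc 1 K, U k ω ≤ l₀)
    (r : ℕ) (hr : 1 ≤ r) :
    ∫ ω, (∑ k ∈ Finset.Icc 1 K, (μ[U k|ℱ (k - 1)]) ω) ^ r ∂μ ≤
      (r.factorial : ℝ) * l₀ ^ r :=
  condexp_sum_moment_bound_general (m0 := m0) μ ℱ K U l₀ hl₀ hUint hUnonneg hsum r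
end
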